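/- Let σ > 0, μ ≥ 0, let M ≥ 2 be an integer, and set γ = μ²/(2σ²). Let ν_Ric be the Borel measure on ℝ given by the density r ↦ f(r; μ, σ) for r ≥ 0 and 0 for r < 0 with respect to Lebesgue measure, and let ν_Ray be the analogous measure with density r ↦ (r/σ²)·exp(−r²/(2σ²)) for r ≥ 0 (the Rayleigh law). Let R, N₁, …, N_{M−1} be jointly independent real random variables on a probability space such that R has law ν_Ric and each N_j has law ν_Ray. Then the probability of detection error satisfies ℙ( ∃ j ∈ {1, …, M−1} with N_j ≥ R ) = ∑_{k=1}^{M−1} binom(M−1, k) · ((−1)^{k+1}/(k+1)) · exp(−γ·k/(k+1)). -/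

import Mathlib

open MeasureTheory ProbabilityTheory

open Set

/-- Modified Bessel function of the first kind of order zero, via its power series. -/
noncomputable def besselI0 (x : ℝ) : ℝ :=
  ∑' k : ℕ, (x / 2) ^ (2 * k) / ((Nat.factorial k : ℝ)) ^ 2

/-- Rician probability density with noncentrality `μ` and scale `σ`. -/
noncomputable def ricePdf (σ μ r : ℝ) : ℝ :=
  (r / σ ^ 2) * Real.exp (-(r ^ 2 + μ ^ 2) / (2 * σ ^ 2)) * besselI0 (r * μ / σ ^ 2)

/-- The Rician law on `ℝ`: density `r ↦ f(r; μ, σ)` on `[0, ∞)` and `0` elsewhere. -/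
noncomputable def riceMeasure (σ μ : ℝ) : Measure ℝ :=
  volume.withDensity fun r => ENNReal.ofReal (if 0 ≤ r then ricePdf σ μ r else 0)

/-- The Rayleigh law on `ℝ`: density `r ↦ (r/σ²)·exp(−r²/(2σ²))` on `[0, ∞)`. -/
noncomputable def rayleighMeasure (σ : ℝ) : Measure ℝ :=
  volume.withDensity fun r =>
    ENNReal.ofReal (if 0 ≤ r then (r / σ ^ 2) * Real.exp (-r ^ 2 / (2 * σ ^ 2)) else 0)

lemma summable_aux {y : ℝ} (hy : 0 ≤ y) :
    Summable fun k : ℕ => y ^ k / ((Nat.factorial k : ℝ)) ^ 2 := by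
  refine Summable.of_nonneg_of_le (fun k => by positivity) (fun k => ?_)
    (Real.summable_pow_div_factorial y)
  have h1 : (1:ℝ) ≤ (Nat.factorial k : ℝ) := by
    exact_mod_cast Nat.one_le_iff_ne_zero.mpr (Nat.factorial_ne_zero k)
  gcongr
  exact le_self_pow₀ h1 two_ne_zero

lemma summable_besselI0 (x : ℝ) :
    Summable fun k : ℕ => (x / 2) ^ (2 * k) / ((Nat.factorial k : ℝ)) ^ 2 := by
  simpa only [pow_mul] using summable_aux (sq_nonneg (x / 2))

lemma besselI0_nonneg (x : ℝ) : 0 ≤ besselI0 x :=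
  tsum_nonneg fun k => by rw [pow_mul]; positivity

lemma besselI0_zero : besselI0 0 = 1 := by
  unfold besselI0
  rw [tsum_eq_single 0 (fun k hk => by
    rw [zero_div, zero_pow (by omega), zero_div])]
  norm_num

lemma ricePdf_nonneg {σ μ x : ℝ} (hx : 0 ≤ x) : 0 ≤ ricePdf σ μ x :=
  mul_nonneg (mul_nonneg (div_nonneg hx (sq_nonneg σ)) (Real.exp_pos _).le) (besselI0_nonneg _)

lemma integrableOn_pow_mul_exp {a : ℝ} (ha : 0 < a) (n : ℕ) :
    IntegrableOn (fun x : ℝ => x ^ n * Real.exp (-a * x ^ 2)) (Ioi 0) := by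
  have h := integrableOn_rpow_mul_exp_neg_mul_sq ha (s := (n : ℝ))
    (lt_of_lt_of_le (by norm_num) (Nat.cast_nonneg n))
  refine h.congr_fun (fun x hx => ?_) measurableSet_Ioi
  simp only [Real.rpow_natCast]

lemma integral_pow_odd_mul_exp {a : ℝ} (ha : 0 < a) (k : ℕ) :
    ∫ x in Ioi (0:ℝ), x ^ (2 * k + 1) * Real.exp (-a * x ^ 2)
      = (Nat.factorial k : ℝ) / (2 * a ^ (k + 1)) := by
  have h1 : ∫ y in Ioi (0:ℝ), y ^ k * Real.exp (-a * y)
      = (Nat.factorial k : ℝ) / a ^ (k + 1) := by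
    have h := Real.integral_rpow_mul_exp_neg_mul_Ioi (a := (k : ℝ) + 1) (r := a)
      (by positivity) ha
    have hL : ∫ t in Ioi (0:ℝ), t ^ ((k:ℝ) + 1 - 1) * Real.exp (-(a * t))
        = ∫ y in Ioi (0:ℝ), y ^ k * Real.exp (-a * y) := by
      refine setIntegral_congr_fun measurableSet_Ioi (fun t ht => ?_)
      rw [add_sub_cancel_right, Real.rpow_natCast, neg_mul]
    rw [hL] at h
    have hpow : (1 / a) ^ ((k:ℝ) + 1) = (1 / a) ^ (k + 1 : ℕ) := by
      rw [← Real.rpow_natCast (1 / a) (k + 1)]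
      norm_num
    rw [h, hpow, Real.Gamma_nat_eq_factorial, one_div, inv_pow, inv_mul_eq_div]
  have h2 := integral_comp_rpow_Ioi (fun y => y ^ k * Real.exp (-a * y)) (p := 2) two_ne_zero
  have key : ∫ x in Ioi (0:ℝ), 2 * (x ^ (2 * k + 1) * Real.exp (-a * x ^ 2))
      = ∫ y in Ioi (0:ℝ), y ^ k * Real.exp (-a * y) := by
    rw [← h2]
    refine setIntegral_congr_fun measurableSet_Ioi (fun x hx => ?_)
    show 2 * (x ^ (2 * k + 1) * Real.exp (-a * x ^ 2))
      = (|(2:ℝ)| * x ^ ((2:ℝ) - 1)) • ((x ^ (2:ℝ)) ^ k * Real.exp (-a * x ^ (2:ℝ)))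
    rw [Real.rpow_two, show ((2:ℝ) - 1) = 1 by norm_num, Real.rpow_one, smul_eq_mul,
      abs_of_pos (by norm_num : (0:ℝ) < 2), ← pow_mul]
    ring
  rw [MeasureTheory.integral_const_mul, h1] at key
  rw [show (Nat.factorial k : ℝ) / (2 * a ^ (k + 1)) = (1/2) * ((Nat.factorial k : ℝ) / a ^ (k+1)) by ring,
    ← key]
  ring

noncomputable def riceTerm (σ μ t : ℝ) (k : ℕ) (x : ℝ) : ℝ :=
  if 0 ≤ x then
    (1 / σ ^ 2 * Real.exp (-μ ^ 2 / (2 * σ ^ 2)))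
      * ((μ / (2 * σ ^ 2)) ^ (2 * k) / ((Nat.factorial k : ℝ)) ^ 2)
      * (x ^ (2 * k + 1) * Real.exp (-((1 + t) / (2 * σ ^ 2)) * x ^ 2))
  else 0

lemma riceTerm_nonneg (σ μ t : ℝ) (k : ℕ) (x : ℝ) : 0 ≤ riceTerm σ μ t k x := by
  unfold riceTerm
  split
  · rename_i hx
    have h1 : (0:ℝ) ≤ (μ / (2 * σ ^ 2)) ^ (2 * k) := by rw [pow_mul]; positivity
    have h2 : (0:ℝ) ≤ x ^ (2 * k + 1) := pow_nonneg hx _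
    positivity
  · exact le_refl 0

lemma rice_density_tsum (σ μ : ℝ) (hσ : 0 < σ) (t x : ℝ) :
    ENNReal.ofReal (if 0 ≤ x then ricePdf σ μ x * Real.exp (-t * x ^ 2 / (2 * σ ^ 2)) else 0)
      = ∑' k : ℕ, ENNReal.ofReal (riceTerm σ μ t k x) := by
  have hσ2 : (0:ℝ) < σ ^ 2 := by positivity
  by_cases hx : 0 ≤ x
  · simp only [riceTerm, if_pos hx]
    have hreal : ricePdf σ μ x * Real.exp (-t * x ^ 2 / (2 * σ ^ 2))
        = ∑' k : ℕ, (1 / σ ^ 2 * Real.exp (-μ ^ 2 / (2 * σ ^ 2)))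
            * ((μ / (2 * σ ^ 2)) ^ (2 * k) / ((Nat.factorial k : ℝ)) ^ 2)
            * (x ^ (2 * k + 1) * Real.exp (-((1 + t) / (2 * σ ^ 2)) * x ^ 2)) := by
      rw [ricePdf]
      unfold besselI0
      rw [show (x / σ ^ 2) * Real.exp (-(x ^ 2 + μ ^ 2) / (2 * σ ^ 2))
            * (∑' k : ℕ, (x * μ / σ ^ 2 / 2) ^ (2 * k) / ((Nat.factorial k : ℝ)) ^ 2)
            * Real.exp (-t * x ^ 2 / (2 * σ ^ 2))
          = ((x / σ ^ 2) * Real.exp (-(x ^ 2 + μ ^ 2) / (2 * σ ^ 2))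
              * Real.exp (-t * x ^ 2 / (2 * σ ^ 2)))
            * (∑' k : ℕ, (x * μ / σ ^ 2 / 2) ^ (2 * k) / ((Nat.factorial k : ℝ)) ^ 2)
          from by ring]
      rw [← tsum_mul_left]
      refine tsum_congr fun k => ?_
      have hexp : Real.exp (-(x ^ 2 + μ ^ 2) / (2 * σ ^ 2)) * Real.exp (-t * x ^ 2 / (2 * σ ^ 2))
          = Real.exp (-μ ^ 2 / (2 * σ ^ 2)) * Real.exp (-((1 + t) / (2 * σ ^ 2)) * x ^ 2) := by
        rw [← Real.exp_add, ← Real.exp_add]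
        congr 1
        field_simp
        ring
      have hpow : (x * μ / σ ^ 2 / 2) ^ (2 * k)
          = x ^ (2 * k) * (μ / (2 * σ ^ 2)) ^ (2 * k) := by
        rw [show x * μ / σ ^ 2 / 2 = x * (μ / (2 * σ ^ 2)) from by
          rw [div_div, mul_comm (σ ^ 2) 2, mul_div_assoc], mul_pow]
      rw [hpow]
      linear_combination (x / σ ^ 2 * (x ^ (2 * k) * (μ / (2 * σ ^ 2)) ^ (2 * k)
        / ((Nat.factorial k : ℝ)) ^ 2)) * hexp
    rw [hreal]
    rw [ENNReal.ofReal_tsum_of_nonneg]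
    · intro k
      have h1 : (0:ℝ) ≤ (μ / (2 * σ ^ 2)) ^ (2 * k) := by rw [pow_mul]; positivity
      have h2 : (0:ℝ) ≤ x ^ (2 * k + 1) := pow_nonneg hx _
      positivity
    · have h0 : Summable (fun k : ℕ =>
          ((x * (μ / (2 * σ ^ 2))) ^ 2) ^ k / ((Nat.factorial k : ℝ)) ^ 2) :=
        summable_aux (sq_nonneg _)
      refine ((h0.mul_left ((1 / σ ^ 2 * Real.exp (-μ ^ 2 / (2 * σ ^ 2)))
          * (x * Real.exp (-((1 + t) / (2 * σ ^ 2)) * x ^ 2)))).congr fun k => ?_)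
      rw [← pow_mul, mul_pow]
      ring
  · simp only [riceTerm, if_neg hx, ENNReal.ofReal_zero, tsum_zero]

lemma measurable_ofReal_riceTerm (σ μ t : ℝ) (k : ℕ) :
    Measurable fun x => ENNReal.ofReal (riceTerm σ μ t k x) := by
  unfold riceTerm
  refine Measurable.ennreal_ofReal (Measurable.ite measurableSet_Ici ?_ measurable_const)
  have : Continuous fun x : ℝ =>
      (1 / σ ^ 2 * Real.exp (-μ ^ 2 / (2 * σ ^ 2)))
        * ((μ / (2 * σ ^ 2)) ^ (2 * k) / ((Nat.factorial k : ℝ)) ^ 2)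
        * (x ^ (2 * k + 1) * Real.exp (-((1 + t) / (2 * σ ^ 2)) * x ^ 2)) := by
    fun_prop
  exact this.measurable

lemma measurable_rice_density (σ μ : ℝ) (hσ : 0 < σ) :
    Measurable fun x => ENNReal.ofReal (if 0 ≤ x then ricePdf σ μ x else 0) := by
  have heq : (fun x => ENNReal.ofReal (if 0 ≤ x then ricePdf σ μ x else 0))
      = fun x => ∑' k : ℕ, ENNReal.ofReal (riceTerm σ μ 0 k x) := by
    funext x
    rw [← rice_density_tsum σ μ hσ 0 x]
    congr 1
    split
    · rw [show -(0:ℝ) * x ^ 2 / (2 * σ ^ 2) = 0 by ring, Real.exp_zero, mul_one]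
    · rfl
  rw [heq]
  exact Measurable.ennreal_tsum fun k => measurable_ofReal_riceTerm σ μ 0 k

lemma measurable_ite_ricePdf (σ μ : ℝ) (hσ : 0 < σ) :
    Measurable fun x => if 0 ≤ x then ricePdf σ μ x else 0 := by
  have h := (measurable_rice_density σ μ hσ).ennreal_toReal
  have heq : (fun x => (ENNReal.ofReal (if 0 ≤ x then ricePdf σ μ x else 0)).toReal)
      = fun x => if 0 ≤ x then ricePdf σ μ x else 0 := by
    funext x
    refine ENNReal.toReal_ofReal ?_
    split
    · exact ricePdf_nonneg ‹_›
    · exact le_refl 0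
  rwa [heq] at h

lemma riceTerm_lintegral (σ μ t : ℝ) (hσ : 0 < σ) (ht : 0 ≤ t) (k : ℕ) :
    ∫⁻ x, ENNReal.ofReal (riceTerm σ μ t k x)
      = ENNReal.ofReal ((1 / σ ^ 2 * Real.exp (-μ ^ 2 / (2 * σ ^ 2)))
          * ((μ / (2 * σ ^ 2)) ^ (2 * k) / ((Nat.factorial k : ℝ)) ^ 2)
          * ((Nat.factorial k : ℝ) / (2 * ((1 + t) / (2 * σ ^ 2)) ^ (k + 1)))) := by
  have hσ2 : (0:ℝ) < σ ^ 2 := by positivity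
  have h1t : (0:ℝ) < 1 + t := by linarith
  have hbpos : 0 < (1 + t) / (2 * σ ^ 2) := by positivity
  have hC : (0:ℝ) ≤ (1 / σ ^ 2 * Real.exp (-μ ^ 2 / (2 * σ ^ 2)))
      * ((μ / (2 * σ ^ 2)) ^ (2 * k) / ((Nat.factorial k : ℝ)) ^ 2) := by
    have h1 : (0:ℝ) ≤ (μ / (2 * σ ^ 2)) ^ (2 * k) := by rw [pow_mul]; positivity
    positivity
  have hind : (fun x => ENNReal.ofReal (riceTerm σ μ t k x))
      = (Ici (0:ℝ)).indicator (fun x => ENNReal.ofReal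
          ((1 / σ ^ 2 * Real.exp (-μ ^ 2 / (2 * σ ^ 2)))
            * ((μ / (2 * σ ^ 2)) ^ (2 * k) / ((Nat.factorial k : ℝ)) ^ 2)
            * (x ^ (2 * k + 1) * Real.exp (-((1 + t) / (2 * σ ^ 2)) * x ^ 2)))) := by
    funext x
    rw [Set.indicator_apply]
    unfold riceTerm
    by_cases hx : (0:ℝ) ≤ x
    · rw [if_pos hx, if_pos (mem_Ici.mpr hx)]
    · rw [if_neg hx, if_neg (by simpa using hx), ENNReal.ofReal_zero]
  rw [hind, lintegral_indicator measurableSet_Ici,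
    ← setLIntegral_congr (Ioi_ae_eq_Ici (a := (0:ℝ)))]
  have hint : Integrable (fun x : ℝ =>
      (1 / σ ^ 2 * Real.exp (-μ ^ 2 / (2 * σ ^ 2)))
        * ((μ / (2 * σ ^ 2)) ^ (2 * k) / ((Nat.factorial k : ℝ)) ^ 2)
        * (x ^ (2 * k + 1) * Real.exp (-((1 + t) / (2 * σ ^ 2)) * x ^ 2)))
      (volume.restrict (Ioi 0)) :=
    (integrableOn_pow_mul_exp hbpos (2 * k + 1)).const_mul _
  have hnn : 0 ≤ᵐ[volume.restrict (Ioi (0:ℝ))] fun x : ℝ =>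
      (1 / σ ^ 2 * Real.exp (-μ ^ 2 / (2 * σ ^ 2)))
        * ((μ / (2 * σ ^ 2)) ^ (2 * k) / ((Nat.factorial k : ℝ)) ^ 2)
        * (x ^ (2 * k + 1) * Real.exp (-((1 + t) / (2 * σ ^ 2)) * x ^ 2)) := by
    refine (ae_restrict_mem measurableSet_Ioi).mono fun x hx => ?_
    exact mul_nonneg hC (mul_nonneg (pow_nonneg (le_of_lt hx) _) (Real.exp_pos _).le)
  rw [← ofReal_integral_eq_lintegral_ofReal hint hnn]
  congr 1
  rw [MeasureTheory.integral_const_mul, integral_pow_odd_mul_exp hbpos k]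

lemma rice_exp_lintegral (σ μ : ℝ) (hσ : 0 < σ) (t : ℝ) (ht : 0 ≤ t) :
    ∫⁻ x : ℝ, ENNReal.ofReal
        (if 0 ≤ x then ricePdf σ μ x * Real.exp (-t * x ^ 2 / (2 * σ ^ 2)) else 0)
      = ENNReal.ofReal (1 / (1 + t)
          * Real.exp (-(μ ^ 2 / (2 * σ ^ 2)) * (t / (1 + t)))) := by
  have hσ2 : (0:ℝ) < σ ^ 2 := by positivity
  have h1t : (0:ℝ) < 1 + t := by linarith
  have hbpos : 0 < (1 + t) / (2 * σ ^ 2) := by positivity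
  have h1 : ∫⁻ x : ℝ, ENNReal.ofReal
      (if 0 ≤ x then ricePdf σ μ x * Real.exp (-t * x ^ 2 / (2 * σ ^ 2)) else 0)
      = ∑' k : ℕ, ENNReal.ofReal ((1 / σ ^ 2 * Real.exp (-μ ^ 2 / (2 * σ ^ 2)))
          * ((μ / (2 * σ ^ 2)) ^ (2 * k) / ((Nat.factorial k : ℝ)) ^ 2)
          * ((Nat.factorial k : ℝ) / (2 * ((1 + t) / (2 * σ ^ 2)) ^ (k + 1)))) := by
    rw [lintegral_congr (rice_density_tsum σ μ hσ t),
      lintegral_tsum (fun k => (measurable_ofReal_riceTerm σ μ t k).aemeasurable)]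
    exact tsum_congr fun k => riceTerm_lintegral σ μ t hσ ht k
  rw [h1]
  have hterm : ∀ k : ℕ, (1 / σ ^ 2 * Real.exp (-μ ^ 2 / (2 * σ ^ 2)))
      * ((μ / (2 * σ ^ 2)) ^ (2 * k) / ((Nat.factorial k : ℝ)) ^ 2)
      * ((Nat.factorial k : ℝ) / (2 * ((1 + t) / (2 * σ ^ 2)) ^ (k + 1)))
      = (Real.exp (-μ ^ 2 / (2 * σ ^ 2)) / (1 + t))
          * (((μ / (2 * σ ^ 2)) ^ 2 / ((1 + t) / (2 * σ ^ 2))) ^ k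
              / (Nat.factorial k : ℝ)) := by
    intro k
    have hk : ((Nat.factorial k : ℝ)) ≠ 0 := Nat.cast_ne_zero.mpr (Nat.factorial_ne_zero k)
    set b : ℝ := (1 + t) / (2 * σ ^ 2) with hbdef
    have hbne : b ≠ 0 := ne_of_gt hbpos
    have hb1 : 2 * σ ^ 2 * b = 1 + t := by rw [hbdef]; field_simp
    clear_value b
    rw [pow_mul, pow_succ, div_pow, ← hb1]
    have hBne : b ^ k ≠ 0 := pow_ne_zero _ hbne
    field_simp
    ring_nf
    simp only [inv_pow, mul_assoc, mul_inv_cancel_left₀ hBne]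
  have hnn : ∀ k : ℕ, 0 ≤ (1 / σ ^ 2 * Real.exp (-μ ^ 2 / (2 * σ ^ 2)))
      * ((μ / (2 * σ ^ 2)) ^ (2 * k) / ((Nat.factorial k : ℝ)) ^ 2)
      * ((Nat.factorial k : ℝ) / (2 * ((1 + t) / (2 * σ ^ 2)) ^ (k + 1))) := by
    intro k
    have h1' : (0:ℝ) ≤ (μ / (2 * σ ^ 2)) ^ (2 * k) := by rw [pow_mul]; positivity
    positivity
  have hsummable : Summable fun k : ℕ => (1 / σ ^ 2 * Real.exp (-μ ^ 2 / (2 * σ ^ 2)))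
      * ((μ / (2 * σ ^ 2)) ^ (2 * k) / ((Nat.factorial k : ℝ)) ^ 2)
      * ((Nat.factorial k : ℝ) / (2 * ((1 + t) / (2 * σ ^ 2)) ^ (k + 1))) := by
    refine Summable.congr (((Real.summable_pow_div_factorial
      ((μ / (2 * σ ^ 2)) ^ 2 / ((1 + t) / (2 * σ ^ 2)))).mul_left
      (Real.exp (-μ ^ 2 / (2 * σ ^ 2)) / (1 + t)))) fun k => (hterm k).symm
  rw [← ENNReal.ofReal_tsum_of_nonneg hnn hsummable]
  congr 1
  rw [tsum_congr hterm, tsum_mul_left]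
  have hexp : (∑' k : ℕ, ((μ / (2 * σ ^ 2)) ^ 2 / ((1 + t) / (2 * σ ^ 2))) ^ k
      / (Nat.factorial k : ℝ))
      = Real.exp ((μ / (2 * σ ^ 2)) ^ 2 / ((1 + t) / (2 * σ ^ 2))) := by
    rw [Real.exp_eq_exp_ℝ, NormedSpace.exp_eq_tsum_div]
  rw [hexp]
  rw [show Real.exp (-μ ^ 2 / (2 * σ ^ 2)) / (1 + t)
      * Real.exp ((μ / (2 * σ ^ 2)) ^ 2 / ((1 + t) / (2 * σ ^ 2)))
      = 1 / (1 + t) * Real.exp (-μ ^ 2 / (2 * σ ^ 2)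
          + (μ / (2 * σ ^ 2)) ^ 2 / ((1 + t) / (2 * σ ^ 2))) from by
    rw [Real.exp_add]; ring]
  congr 2
  field_simp
  ring

lemma rice_lintegral_one (σ μ : ℝ) (hσ : 0 < σ) :
    ∫⁻ x : ℝ, ENNReal.ofReal (if 0 ≤ x then ricePdf σ μ x else 0) = 1 := by
  have h := rice_exp_lintegral σ μ hσ 0 le_rfl
  have heq : (fun x : ℝ => ENNReal.ofReal
      (if 0 ≤ x then ricePdf σ μ x * Real.exp (-(0:ℝ) * x ^ 2 / (2 * σ ^ 2)) else 0))
      = fun x : ℝ => ENNReal.ofReal (if 0 ≤ x then ricePdf σ μ x else 0) := by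
    funext x
    congr 1
    split
    · rw [show -(0:ℝ) * x ^ 2 / (2 * σ ^ 2) = 0 by ring, Real.exp_zero, mul_one]
    · rfl
  rw [lintegral_congr (fun x => congrFun heq x)] at h
  rw [h]
  norm_num

lemma rice_isProbability (σ μ : ℝ) (hσ : 0 < σ) :
    IsProbabilityMeasure (riceMeasure σ μ) := by
  constructor
  rw [riceMeasure, withDensity_apply _ MeasurableSet.univ, Measure.restrict_univ]
  exact rice_lintegral_one σ μ hσ

lemma rayleigh_eq_rice (σ : ℝ) : rayleighMeasure σ = riceMeasure σ 0 := by
  unfold rayleighMeasure riceMeasure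
  congr 1
  funext r
  congr 1
  split
  · rw [ricePdf, mul_zero, zero_div, besselI0_zero, mul_one]
    norm_num
  · rfl

lemma rayleigh_isProbability (σ : ℝ) (hσ : 0 < σ) :
    IsProbabilityMeasure (rayleighMeasure σ) := by
  rw [rayleigh_eq_rice]
  exact rice_isProbability σ 0 hσ

lemma rayleigh_cdf (σ : ℝ) (hσ : 0 < σ) (x : ℝ) :
    rayleighMeasure σ (Iio x)
      = ENNReal.ofReal (if 0 ≤ x then 1 - Real.exp (-x ^ 2 / (2 * σ ^ 2)) else 0) := by
  have hσ2 : (0:ℝ) < σ ^ 2 := by positivity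
  rw [rayleighMeasure, withDensity_apply _ measurableSet_Iio]
  by_cases hx : (0:ℝ) ≤ x
  · rw [if_pos hx]
    have hind : (fun r : ℝ => ENNReal.ofReal
        (if 0 ≤ r then (r / σ ^ 2) * Real.exp (-r ^ 2 / (2 * σ ^ 2)) else 0))
        = (Ioi (0:ℝ)).indicator
            (fun r => ENNReal.ofReal ((r / σ ^ 2) * Real.exp (-r ^ 2 / (2 * σ ^ 2)))) := by
      funext r
      rw [Set.indicator_apply]
      rcases lt_trichotomy r 0 with h|h|h
      · rw [if_neg (not_le.mpr h), if_neg (by simp [mem_Ioi]; linarith), ENNReal.ofReal_zero]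
      · subst h
        rw [if_pos le_rfl, if_neg (by simp)]
        simp
      · rw [if_pos h.le, if_pos (mem_Ioi.mpr h)]
    rw [hind, lintegral_indicator measurableSet_Ioi,
      Measure.restrict_restrict measurableSet_Ioi, Set.Ioi_inter_Iio]
    have hcont : Continuous fun r : ℝ => (r / σ ^ 2) * Real.exp (-r ^ 2 / (2 * σ ^ 2)) := by
      fun_prop
    have hint : IntegrableOn (fun r : ℝ => (r / σ ^ 2) * Real.exp (-r ^ 2 / (2 * σ ^ 2)))
        (Ioo 0 x) volume := (hcont.integrableOn_Icc).mono_set Set.Ioo_subset_Icc_self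
    have hnn : 0 ≤ᵐ[volume.restrict (Ioo (0:ℝ) x)]
        fun r : ℝ => (r / σ ^ 2) * Real.exp (-r ^ 2 / (2 * σ ^ 2)) :=
      (ae_restrict_mem measurableSet_Ioo).mono fun r hr =>
        mul_nonneg (div_nonneg hr.1.le hσ2.le) (Real.exp_pos _).le
    rw [← ofReal_integral_eq_lintegral_ofReal hint hnn]
    congr 1
    rw [← integral_Ioc_eq_integral_Ioo, ← intervalIntegral.integral_of_le hx]
    have hderiv : ∀ r ∈ Set.uIcc (0:ℝ) x,
        HasDerivAt (fun y : ℝ => -Real.exp (-y ^ 2 / (2 * σ ^ 2)))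
          ((r / σ ^ 2) * Real.exp (-r ^ 2 / (2 * σ ^ 2))) r := by
      intro r _
      have h1 : HasDerivAt (fun y : ℝ => -y ^ 2 / (2 * σ ^ 2))
          (-(2 * r ^ 1) / (2 * σ ^ 2)) r := by
        simpa using (hasDerivAt_pow 2 r).neg.div_const (2 * σ ^ 2)
      have h2 : HasDerivAt (fun y : ℝ => -Real.exp (-y ^ 2 / (2 * σ ^ 2))) _ r := h1.exp.neg
      convert h2 using 1
      field_simp
    have hii : IntervalIntegrable (fun r : ℝ => (r / σ ^ 2) * Real.exp (-r ^ 2 / (2 * σ ^ 2)))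
        volume 0 x := hcont.intervalIntegrable 0 x
    rw [intervalIntegral.integral_eq_sub_of_hasDerivAt hderiv hii]
    simp
    ring
  · rw [if_neg hx, ENNReal.ofReal_zero]
    push_neg at hx
    rw [← lintegral_zero (μ := volume.restrict (Iio x))]
    refine setLIntegral_congr_fun measurableSet_Iio (fun r hr => ?_)
    rw [if_neg (by push_neg; exact lt_trans hr hx), ENNReal.ofReal_zero]

noncomputable def riceExpFun (σ μ s : ℝ) : ℝ → ℝ := fun x =>
  if 0 ≤ x then ricePdf σ μ x * Real.exp (-s * x ^ 2 / (2 * σ ^ 2)) else 0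

lemma riceExpFun_nonneg (σ μ s : ℝ) (x : ℝ) : 0 ≤ riceExpFun σ μ s x := by
  unfold riceExpFun
  split
  · exact mul_nonneg (ricePdf_nonneg ‹_›) (Real.exp_pos _).le
  · exact le_rfl

lemma riceExpFun_measurable (σ μ s : ℝ) (hσ : 0 < σ) : Measurable (riceExpFun σ μ s) := by
  have heq : riceExpFun σ μ s = fun x =>
      (if 0 ≤ x then ricePdf σ μ x else 0) * Real.exp (-s * x ^ 2 / (2 * σ ^ 2)) := by
    funext x
    unfold riceExpFun
    split
    · rfl
    · rw [zero_mul]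
  rw [heq]
  exact (measurable_ite_ricePdf σ μ hσ).mul (by fun_prop)

lemma riceExpFun_integrable (σ μ s : ℝ) (hσ : 0 < σ) (hs : 0 ≤ s) :
    Integrable (riceExpFun σ μ s) volume := by
  refine ⟨(riceExpFun_measurable σ μ s hσ).aestronglyMeasurable, ?_⟩
  rw [hasFiniteIntegral_iff_ofReal (ae_of_all _ (riceExpFun_nonneg σ μ s))]
  rw [show (fun x => ENNReal.ofReal (riceExpFun σ μ s x)) = fun x => ENNReal.ofReal
    (if 0 ≤ x then ricePdf σ μ x * Real.exp (-s * x ^ 2 / (2 * σ ^ 2)) else 0) from rfl]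
  rw [rice_exp_lintegral σ μ hσ s hs]
  exact ENNReal.ofReal_lt_top

lemma riceExpFun_integral (σ μ s : ℝ) (hσ : 0 < σ) (hs : 0 ≤ s) :
    ∫ x, riceExpFun σ μ s x
      = 1 / (1 + s) * Real.exp (-(μ ^ 2 / (2 * σ ^ 2)) * (s / (1 + s))) := by
  have h1s : (0:ℝ) < 1 + s := by linarith
  have h := ofReal_integral_eq_lintegral_ofReal (riceExpFun_integrable σ μ s hσ hs)
    (ae_of_all _ (riceExpFun_nonneg σ μ s))
  rw [show (fun x => ENNReal.ofReal (riceExpFun σ μ s x)) = fun x => ENNReal.ofReal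
    (if 0 ≤ x then ricePdf σ μ x * Real.exp (-s * x ^ 2 / (2 * σ ^ 2)) else 0) from rfl,
    rice_exp_lintegral σ μ hσ s hs] at h
  exact (ENNReal.ofReal_eq_ofReal_iff
    (integral_nonneg (riceExpFun_nonneg σ μ s)) (by positivity)).mp h

lemma binom_expansion (σ μ : ℝ) (M : ℕ) (hM : 2 ≤ M) :
    (fun x : ℝ => if 0 ≤ x then
        ricePdf σ μ x * (1 - Real.exp (-x ^ 2 / (2 * σ ^ 2))) ^ (M - 1) else 0)
      = fun x => ∑ k ∈ Finset.range M,
          ((-1:ℝ) ^ k * ((M - 1).choose k : ℝ)) * riceExpFun σ μ k x := by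
  funext x
  by_cases hx : (0:ℝ) ≤ x
  · rw [if_pos hx]
    have hM1 : M - 1 + 1 = M := by omega
    rw [show (1 - Real.exp (-x ^ 2 / (2 * σ ^ 2)))
        = (-(Real.exp (-x ^ 2 / (2 * σ ^ 2))) + 1) from by ring, add_pow, hM1,
      Finset.mul_sum]
    refine Finset.sum_congr rfl fun k hk => ?_
    unfold riceExpFun
    rw [if_pos hx, one_pow, neg_pow, ← Real.exp_nat_mul,
      show (k:ℝ) * (-x ^ 2 / (2 * σ ^ 2)) = -(k:ℝ) * x ^ 2 / (2 * σ ^ 2) from by ring]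
    ring
  · rw [if_neg hx]
    symm
    refine Finset.sum_eq_zero fun k hk => ?_
    unfold riceExpFun
    rw [if_neg hx, mul_zero]

/-- The probability of detection error for Rician-distributed intended port amplitude `R`
against `M - 1` independent Rayleigh-distributed interference-free ports equals the
closed-form SER expression. -/
theorem prob_error_eq_closed_form_SER
    {Ω : Type*} [MeasurableSpace Ω] (P : Measure Ω) [IsProbabilityMeasure P]
    (σ μ : ℝ) (hσ : 0 < σ) (hμ : 0 ≤ μ) (M : ℕ) (hM : 2 ≤ M)
    (γ : ℝ) (hγ : γ = μ ^ 2 / (2 * σ ^ 2))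
    (i0 : Fin M) (hi0 : (i0 : ℕ) = 0)
    (X : Fin M → Ω → ℝ) (hmeas : ∀ j, Measurable (X j))
    (hindep : iIndepFun X P)
    (hR : Measure.map (X i0) P = riceMeasure σ μ)
    (hN : ∀ j : Fin M, j ≠ i0 → Measure.map (X j) P = rayleighMeasure σ) :
    (P {ω | ∃ j : Fin M, j ≠ i0 ∧ X i0 ω ≤ X j ω}).toReal
      = ∑ k ∈ Finset.Icc 1 (M - 1),
          (Nat.choose (M - 1) k : ℝ) * ((-1 : ℝ) ^ (k + 1) / ((k : ℝ) + 1))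
            * Real.exp (-γ * k / ((k : ℝ) + 1)) := by
  classical
  subst hγ
  have hσ2 : (0:ℝ) < σ ^ 2 := by positivity
  set T : Finset (Fin M) := Finset.univ.erase i0 with hT
  have hTcard : T.card = M - 1 := by
    rw [hT, Finset.card_erase_of_mem (Finset.mem_univ i0), Finset.card_univ, Fintype.card_fin]
  have hTne : T.Nonempty := Finset.card_pos.mp (by rw [hTcard]; omega)
  have hTa : T.attach.Nonempty := Finset.attach_nonempty_iff.mpr hTne
  set Z : Ω → ℝ := fun ω => T.attach.sup' hTa (fun j => X j.1 ω) with hZdef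
  have hZmeas : Measurable Z := by
    have h := Finset.measurable_sup' hTa (fun (j : {x // x ∈ T}) _ => hmeas j.1)
    have hfe : (T.attach.sup' hTa fun j => X j.1) = Z :=
      funext fun ω => Finset.sup'_apply hTa _ ω
    rwa [hfe] at h
  haveI hPrice : IsProbabilityMeasure (riceMeasure σ μ) := rice_isProbability σ μ hσ
  haveI hPray : IsProbabilityMeasure (rayleighMeasure σ) := rayleigh_isProbability σ hσ
  haveI : IsProbabilityMeasure (P.map Z) := Measure.isProbabilityMeasure_map hZmeas.aemeasurable
  have hEset : {ω | ∃ j : Fin M, j ≠ i0 ∧ X i0 ω ≤ X j ω}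
      = (fun ω => (X i0 ω, Z ω)) ⁻¹' {p : ℝ × ℝ | p.1 ≤ p.2} := by
    ext ω
    simp only [Set.mem_setOf_eq, Set.mem_preimage]
    constructor
    · rintro ⟨j, hj, hle⟩
      exact (Finset.le_sup'_iff hTa).mpr
        ⟨⟨j, Finset.mem_erase.mpr ⟨hj, Finset.mem_univ j⟩⟩, Finset.mem_attach _ _, hle⟩
    · intro h
      obtain ⟨j, _, hle⟩ := (Finset.le_sup'_iff hTa).mp h
      exact ⟨j.1, (Finset.mem_erase.mp j.2).1, hle⟩
  have hRZ : IndepFun (X i0) Z P := by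
    have hdisj : Disjoint ({i0} : Finset (Fin M)) T := by
      rw [Finset.disjoint_singleton_left, hT]
      exact Finset.notMem_erase i0 _
    have h12 := hindep.indepFun_finset {i0} T hdisj hmeas
    have hφ : Measurable fun g : {x // x ∈ ({i0} : Finset (Fin M))} → ℝ =>
        g ⟨i0, Finset.mem_singleton_self i0⟩ := measurable_pi_apply _
    have hψ : Measurable fun g : {x // x ∈ T} → ℝ =>
        T.attach.sup' hTa (fun j => g j) := by
      have h := Finset.measurable_sup' (f := fun (j : {x // x ∈ T}) (g : {x // x ∈ T} → ℝ) => g j)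
        hTa (fun j _ => measurable_pi_apply j)
      have hfe : (T.attach.sup' hTa fun (j : {x // x ∈ T}) (g : {x // x ∈ T} → ℝ) => g j)
          = fun g : {x // x ∈ T} → ℝ => T.attach.sup' hTa (fun j => g j) :=
        funext fun g => Finset.sup'_apply hTa _ g
      rwa [hfe] at h
    exact h12.comp hφ hψ
  have hmapProd : P.map (fun ω => (X i0 ω, Z ω)) = (riceMeasure σ μ).prod (P.map Z) := by
    rw [← hR]
    exact (indepFun_iff_map_prod_eq_prod_map_map
      (hmeas i0).aemeasurable hZmeas.aemeasurable).mp hRZ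
  have hEmeas : MeasurableSet {ω | ∃ j : Fin M, j ≠ i0 ∧ X i0 ω ≤ X j ω} := by
    rw [hEset]
    exact ((hmeas i0).prodMk hZmeas) (measurableSet_le measurable_fst measurable_snd)
  have hcompl : {ω | ∃ j : Fin M, j ≠ i0 ∧ X i0 ω ≤ X j ω}ᶜ
      = (fun ω => (X i0 ω, Z ω)) ⁻¹' {p : ℝ × ℝ | p.2 < p.1} := by
    rw [hEset, ← Set.preimage_compl]
    congr 1
    ext p
    simp [not_le]
  have hsetlt : MeasurableSet {p : ℝ × ℝ | p.2 < p.1} :=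
    measurableSet_lt measurable_snd measurable_fst
  have hPEc : P ({ω | ∃ j : Fin M, j ≠ i0 ∧ X i0 ω ≤ X j ω}ᶜ)
      = ∫⁻ x, (P.map Z) (Iio x) ∂(riceMeasure σ μ) := by
    rw [hcompl, ← Measure.map_apply ((hmeas i0).prodMk hZmeas) hsetlt, hmapProd,
      Measure.prod_apply hsetlt]
    refine lintegral_congr fun x => ?_
    have hsec : (Prod.mk x ⁻¹' {p : ℝ × ℝ | p.2 < p.1}) = Iio x := by
      ext y
      simp [Set.mem_preimage, Set.mem_Iio]
    rw [hsec]
  have hZIio : ∀ x : ℝ, (P.map Z) (Iio x) = (rayleighMeasure σ (Iio x)) ^ (M - 1) := by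
    intro x
    rw [Measure.map_apply hZmeas measurableSet_Iio]
    have hpre : Z ⁻¹' Iio x = ⋂ j ∈ T, X j ⁻¹' Iio x := by
      ext ω
      simp only [Set.mem_preimage, Set.mem_Iio, Set.mem_iInter]
      constructor
      · intro h j hj
        exact (Finset.sup'_lt_iff hTa).mp h ⟨j, hj⟩ (Finset.mem_attach _ _)
      · intro h
        exact (Finset.sup'_lt_iff hTa).mpr fun j _ => h j.1 j.2
    have hfac : ∀ j ∈ T, P (X j ⁻¹' Iio x) = rayleighMeasure σ (Iio x) := fun j hj => by
      rw [← Measure.map_apply (hmeas j) measurableSet_Iio, hN j (Finset.mem_erase.mp hj).1]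
    rw [hpre, hindep.meas_biInter (fun j hj => ⟨Iio x, measurableSet_Iio, rfl⟩),
      Finset.prod_congr rfl hfac, Finset.prod_const, hTcard]
  have hFnn : ∀ x : ℝ, (0:ℝ) ≤ (if 0 ≤ x then 1 - Real.exp (-x ^ 2 / (2 * σ ^ 2)) else 0) := by
    intro x
    split
    · have : Real.exp (-x ^ 2 / (2 * σ ^ 2)) ≤ 1 := by
        rw [Real.exp_le_one_iff]
        have h1 : (0:ℝ) ≤ x ^ 2 / (2 * σ ^ 2) := by positivity
        rw [neg_div]
        linarith
      linarith
    · exact le_rfl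
  have hgmeas : Measurable fun x : ℝ =>
      (ENNReal.ofReal (if 0 ≤ x then 1 - Real.exp (-x ^ 2 / (2 * σ ^ 2)) else 0)) ^ (M - 1) :=
    ((Measurable.ite measurableSet_Ici (by fun_prop) measurable_const).ennreal_ofReal).pow_const _
  have hstep : ∫⁻ x, (P.map Z) (Iio x) ∂(riceMeasure σ μ)
      = ∫⁻ x, ENNReal.ofReal (if 0 ≤ x then
          ricePdf σ μ x * (1 - Real.exp (-x ^ 2 / (2 * σ ^ 2))) ^ (M - 1) else 0) := by
    calc ∫⁻ x, (P.map Z) (Iio x) ∂(riceMeasure σ μ)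
        = ∫⁻ x, (ENNReal.ofReal
            (if 0 ≤ x then 1 - Real.exp (-x ^ 2 / (2 * σ ^ 2)) else 0)) ^ (M - 1)
            ∂(riceMeasure σ μ) :=
          lintegral_congr fun x => by rw [hZIio x, rayleigh_cdf σ hσ x]
      _ = ∫⁻ x, ((fun x : ℝ => ENNReal.ofReal (if 0 ≤ x then ricePdf σ μ x else 0))
            * fun x : ℝ => (ENNReal.ofReal
              (if 0 ≤ x then 1 - Real.exp (-x ^ 2 / (2 * σ ^ 2)) else 0)) ^ (M - 1)) x := by
          rw [riceMeasure, lintegral_withDensity_eq_lintegral_mul _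
            (measurable_rice_density σ μ hσ) hgmeas]
      _ = ∫⁻ x, ENNReal.ofReal (if 0 ≤ x then
            ricePdf σ μ x * (1 - Real.exp (-x ^ 2 / (2 * σ ^ 2))) ^ (M - 1) else 0) := by
          refine lintegral_congr fun x => ?_
          simp only [Pi.mul_apply]
          by_cases hx : (0:ℝ) ≤ x
          · simp only [if_pos hx]
            rw [← ENNReal.ofReal_pow (by have := hFnn x; rwa [if_pos hx] at this),
              ← ENNReal.ofReal_mul (ricePdf_nonneg hx)]
          · simp only [if_neg hx, ENNReal.ofReal_zero, zero_mul]
  -- Bochner conversion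
  have hfun_eq := binom_expansion σ μ M hM
  have hint : Integrable (fun x : ℝ => if 0 ≤ x then
      ricePdf σ μ x * (1 - Real.exp (-x ^ 2 / (2 * σ ^ 2))) ^ (M - 1) else 0) volume := by
    rw [hfun_eq]
    exact integrable_finset_sum _ fun k _ =>
      (riceExpFun_integrable σ μ k hσ (Nat.cast_nonneg k)).const_mul _
  have hhnn : ∀ x : ℝ, (0:ℝ) ≤ (if 0 ≤ x then
      ricePdf σ μ x * (1 - Real.exp (-x ^ 2 / (2 * σ ^ 2))) ^ (M - 1) else 0) := by
    intro x
    split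
    · refine mul_nonneg (ricePdf_nonneg ‹_›) (pow_nonneg ?_ _)
      have := hFnn x
      rwa [if_pos ‹_›] at this
    · exact le_rfl
  have hPEcval : P ({ω | ∃ j : Fin M, j ≠ i0 ∧ X i0 ω ≤ X j ω}ᶜ)
      = ENNReal.ofReal (∫ x, (if 0 ≤ x then
          ricePdf σ μ x * (1 - Real.exp (-x ^ 2 / (2 * σ ^ 2))) ^ (M - 1) else 0)) := by
    rw [hPEc, hstep, ← ofReal_integral_eq_lintegral_ofReal hint (ae_of_all _ hhnn)]
  have hIntegralVal : ∫ x, (if 0 ≤ x then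
      ricePdf σ μ x * (1 - Real.exp (-x ^ 2 / (2 * σ ^ 2))) ^ (M - 1) else 0)
      = ∑ k ∈ Finset.range M, ((-1:ℝ) ^ k * ((M - 1).choose k : ℝ))
          * (1 / (1 + (k:ℝ)) * Real.exp (-(μ ^ 2 / (2 * σ ^ 2)) * ((k:ℝ) / (1 + (k:ℝ))))) := by
    have hsum := MeasureTheory.integral_finset_sum (μ := volume) (Finset.range M)
      (f := fun (k : ℕ) (x : ℝ) => ((-1:ℝ) ^ k * ((M - 1).choose k : ℝ))
        * riceExpFun σ μ (k : ℝ) x)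
      (fun k _ => (riceExpFun_integrable σ μ (k : ℝ) hσ (Nat.cast_nonneg k)).const_mul _)
    rw [hfun_eq, hsum]
    exact Finset.sum_congr rfl fun k _ => by
      rw [MeasureTheory.integral_const_mul,
        riceExpFun_integral σ μ (k : ℝ) hσ (Nat.cast_nonneg k)]
  -- final assembly
  have hcompl_val : (P ({ω | ∃ j : Fin M, j ≠ i0 ∧ X i0 ω ≤ X j ω}ᶜ)).toReal
      = ∑ k ∈ Finset.range M, ((-1:ℝ) ^ k * ((M - 1).choose k : ℝ))
          * (1 / (1 + (k:ℝ)) * Real.exp (-(μ ^ 2 / (2 * σ ^ 2)) * ((k:ℝ) / (1 + (k:ℝ))))) := by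
    rw [hPEcval, ENNReal.toReal_ofReal (integral_nonneg hhnn), hIntegralVal]
  have hflip : (P {ω | ∃ j : Fin M, j ≠ i0 ∧ X i0 ω ≤ X j ω}).toReal
      = 1 - (P ({ω | ∃ j : Fin M, j ≠ i0 ∧ X i0 ω ≤ X j ω}ᶜ)).toReal := by
    have h1 := prob_compl_eq_one_sub (μ := P) hEmeas
    have h2 : (P ({ω | ∃ j : Fin M, j ≠ i0 ∧ X i0 ω ≤ X j ω}ᶜ)).toReal
        = 1 - (P {ω | ∃ j : Fin M, j ≠ i0 ∧ X i0 ω ≤ X j ω}).toReal := by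
      rw [h1, ENNReal.toReal_sub_of_le prob_le_one ENNReal.one_ne_top, ENNReal.toReal_one]
    linarith
  rw [hflip, hcompl_val]
  -- index juggling
  have hM0 : 0 < M := by omega
  rw [Finset.range_eq_Ico, Finset.sum_eq_sum_Ico_succ_bot hM0]
  have h0term : ((-1:ℝ) ^ 0 * ((M - 1).choose 0 : ℝ))
      * (1 / (1 + ((0:ℕ):ℝ)) * Real.exp (-(μ ^ 2 / (2 * σ ^ 2)) * (((0:ℕ):ℝ) / (1 + ((0:ℕ):ℝ)))))
      = 1 := by norm_num
  rw [h0term]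
  rw [show Finset.Icc 1 (M - 1) = Finset.Ico 1 M from by
    rw [← Finset.Ico_add_one_right_eq_Icc]; congr 1; omega]
  rw [show (1:ℝ) - (1 + ∑ k ∈ Finset.Ico 1 M, ((-1:ℝ) ^ k * ((M - 1).choose k : ℝ))
      * (1 / (1 + (k:ℝ)) * Real.exp (-(μ ^ 2 / (2 * σ ^ 2)) * ((k:ℝ) / (1 + (k:ℝ))))))
      = ∑ k ∈ Finset.Ico 1 M, -(((-1:ℝ) ^ k * ((M - 1).choose k : ℝ))
      * (1 / (1 + (k:ℝ)) * Real.exp (-(μ ^ 2 / (2 * σ ^ 2)) * ((k:ℝ) / (1 + (k:ℝ)))))) from by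
    rw [Finset.sum_neg_distrib]; ring]
  refine Finset.sum_congr rfl fun k hk => ?_
  rw [show -(μ ^ 2 / (2 * σ ^ 2)) * ((k:ℝ) / (1 + (k:ℝ)))
      = -(μ ^ 2 / (2 * σ ^ 2)) * (k:ℝ) / ((k:ℝ) + 1) from by ring]
  rw [pow_succ]
  ring
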